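/- arXiv:1904.05864 — 3 statements merged into one kernel-verified Lean document; each statement's English description precedes it below -/
import Mathlib

section
/- For n ≥ 1 stages with reliability p ∈ (0,1) and l ≥ 1 copies per stage, the per-stage-parallel reliability (1 − (1−p)^l)^n is at least the whole-chain-parallel reliability 1 − (1 − p^n)^l. -/
lemma maj_pow (l : ℕ) (x y u v : ℝ) (hy : 0 ≤ y) (hyu : y ≤ u) (hyv : y ≤ v)
    (hux : u ≤ x) (hvx : v ≤ x) (hsum : x + y = u + v) :
    u ^ l + v ^ l ≤ x ^ l + y ^ l := by
  have key : ∀ x y u v : ℝ, 0 ≤ y → y ≤ v → v ≤ u → u ≤ x →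
      x + y = u + v → u ^ l + v ^ l ≤ x ^ l + y ^ l := by
    intro x y u v hy hyv hvu hux hsum
    have hv : 0 ≤ v := hy.trans hyv
    have hu : 0 ≤ u := hv.trans hvu
    have hx : 0 ≤ x := hu.trans hux
    have e1 : x ^ l - u ^ l = (∑ i ∈ Finset.range l, x ^ i * u ^ (l - 1 - i)) * (x - u) :=
      (geom_sum₂_mul x u l).symm
    have e2 : v ^ l - y ^ l = (∑ i ∈ Finset.range l, v ^ i * y ^ (l - 1 - i)) * (v - y) :=
      (geom_sum₂_mul v y l).symm
    have hd : x - u = v - y := by linarith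
    have h1 : v ^ l - y ^ l ≤ x ^ l - u ^ l := by
      rw [e1, e2, hd]
      apply mul_le_mul_of_nonneg_right _ (by linarith)
      apply Finset.sum_le_sum
      intro i _
      calc v ^ i * y ^ (l - 1 - i) ≤ v ^ i * v ^ (l - 1 - i) :=
            mul_le_mul_of_nonneg_left (pow_le_pow_left₀ hy hyv _) (pow_nonneg hv _)
        _ ≤ x ^ i * u ^ (l - 1 - i) :=
            mul_le_mul (pow_le_pow_left₀ hv (hvu.trans hux) _) (pow_le_pow_left₀ hv hvu _)
              (pow_nonneg hv _) (pow_nonneg hx _)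
    linarith
  rcases le_total v u with h | h
  · exact key x y u v hy hyv h hux hsum
  · have := key x y v u hy hyu h hvx (by linarith)
    linarith

/-- For `n, l ≥ 1` and `p ∈ (0,1)`, the per-stage-parallel reliability
`(1 - (1-p)^l)^n` is at least the whole-chain-parallel reliability
`1 - (1 - p^n)^l`. -/
theorem per_stage_ge_whole_chain (p : ℝ) (hp : p ∈ Set.Ioo (0 : ℝ) 1)
    (n l : ℕ) (hn : 1 ≤ n) (hl : 1 ≤ l) :
    1 - (1 - p ^ n) ^ l ≤ (1 - (1 - p) ^ l) ^ n := by
  obtain ⟨hp0, hp1⟩ := hp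
  have hq0 : (0:ℝ) ≤ 1 - p := by linarith
  induction n, hn using Nat.le_induction with
  | base => simp
  | succ n hn ih =>
      have hpn0 : 0 < p ^ n := pow_pos hp0 n
      have hpn1 : p ^ n ≤ 1 := pow_le_one₀ hp0.le hp1.le
      have hql1 : (1 - p) ^ l ≤ 1 := pow_le_one₀ hq0 (by linarith)
      have hql0 : 0 ≤ (1 - p) ^ l := pow_nonneg hq0 l
      have hA0 : (0:ℝ) ≤ 1 - (1 - p) ^ l := by linarith
      have step1 : (1 - (1 - p) ^ l) * (1 - (1 - p ^ n) ^ l)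
          ≤ (1 - (1 - p) ^ l) ^ (n + 1) := by
        rw [pow_succ]
        calc (1 - (1 - p) ^ l) * (1 - (1 - p ^ n) ^ l)
            ≤ (1 - (1 - p) ^ l) * (1 - (1 - p) ^ l) ^ n :=
              mul_le_mul_of_nonneg_left ih hA0
          _ = (1 - (1 - p) ^ l) ^ n * (1 - (1 - p) ^ l) := mul_comm _ _
      have key : (1 - p) ^ l + (1 - p ^ n) ^ l
          ≤ (1 - p ^ (n + 1)) ^ l + ((1 - p) * (1 - p ^ n)) ^ l := by
        apply maj_pow
        · nlinarith
        · nlinarith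
        · nlinarith
        · have : p ^ (n + 1) ≤ p := by
            calc p ^ (n + 1) = p * p ^ n := by ring
              _ ≤ p * 1 := by nlinarith
              _ = p := mul_one p
          linarith
        · have : p ^ (n + 1) ≤ p ^ n := by
            calc p ^ (n + 1) = p ^ n * p := by ring
              _ ≤ p ^ n * 1 := by nlinarith
              _ = p ^ n := mul_one _
          linarith
        · have : p ^ (n + 1) = p * p ^ n := by ring
          rw [this]; ring
      have expand : (1 - (1 - p) ^ l) * (1 - (1 - p ^ n) ^ l)
          = 1 - (1 - p) ^ l - (1 - p ^ n) ^ l + ((1 - p) * (1 - p ^ n)) ^ l := by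
        rw [mul_pow]; ring
      linarith
end

section
/- For 0 < λ < μ and l ≥ 1, the M/M/l expected response time (l/μ)(1 + ϱ_l/(l(1−λ/μ))) with ϱ_l ∈ [0,1] the Erlang-C probability is at most the M/M/1-split response time l/(μ−λ). -/
/-!
Writing `ρ = λ/μ`, the M/M/1-split time is `l/(μ - λ) = (l/μ)(1 + lρ/(l(1 - ρ)))`, so the claim
is `ϱ_l ≤ lρ`. Since `ϱ_l = A/(1 + A + S)` with `A, S ≥ 0`, always `ϱ_l ≤ 1`, which settles
`lρ ≥ 1`. For `lρ < 1` it suffices that `A (1 - lρ) ≤ lρ`, and this follows from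
`(lρ)^l ≤ lρ`, `1 - lρ ≤ 1 - ρ` and `1 ≤ l!`.
-/

open Finset

section ErlangC

noncomputable def erlangTail (l : ℕ) (ρ : ℝ) : ℝ :=
  (l * ρ) ^ l / (l.factorial * (1 - ρ))

noncomputable def erlangHead (l : ℕ) (ρ : ℝ) : ℝ :=
  ∑ i ∈ Icc 1 (l - 1), (l * ρ) ^ i / i.factorial

/-- `ϱ_l = A/(1 + A + S)` with `A = erlangTail l ρ`, `S = erlangHead l ρ`, written exactly as in
the statement so that it unfolds to it. -/
noncomputable def erlangC (l : ℕ) (ρ : ℝ) : ℝ :=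
  erlangTail l ρ * (1 / (1 + erlangTail l ρ + erlangHead l ρ))

variable {l : ℕ} {ρ : ℝ}

theorem erlangTail_nonneg (hρ0 : 0 ≤ ρ) (hρ1 : ρ < 1) : 0 ≤ erlangTail l ρ := by
  have : 0 < 1 - ρ := by linarith
  unfold erlangTail
  positivity

theorem erlangHead_nonneg (hρ0 : 0 ≤ ρ) : 0 ≤ erlangHead l ρ := by
  unfold erlangHead
  positivity

theorem erlangTail_mul_one_sub_le (hl : 1 ≤ l) (hρ0 : 0 ≤ ρ) (hρ1 : ρ < 1) (hx : l * ρ < 1) :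
    erlangTail l ρ * (1 - l * ρ) ≤ l * ρ := by
  have hl' : (1 : ℝ) ≤ l := by exact_mod_cast hl
  have hx0 : 0 ≤ (l : ℝ) * ρ := by positivity
  have hpow : (l * ρ) ^ l ≤ l * ρ := pow_le_of_le_one hx0 hx.le (by omega)
  have hfac : (1 : ℝ) ≤ l.factorial := by exact_mod_cast l.factorial_pos
  have hload : 1 - l * ρ ≤ 1 - ρ := by nlinarith
  rw [erlangTail, div_mul_eq_mul_div, div_le_iff₀ (by nlinarith)]
  calc (l * ρ) ^ l * (1 - l * ρ) ≤ l * ρ * (1 - ρ) :=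
        mul_le_mul hpow hload (by linarith) hx0
    _ ≤ l * ρ * (l.factorial * (1 - ρ)) := by
        apply mul_le_mul_of_nonneg_left _ hx0
        nlinarith

theorem erlangC_le_one (hρ0 : 0 ≤ ρ) (hρ1 : ρ < 1) : erlangC l ρ ≤ 1 := by
  have hA := erlangTail_nonneg (l := l) hρ0 hρ1
  have hS := erlangHead_nonneg (l := l) hρ0
  rw [erlangC, mul_one_div, div_le_one (by linarith)]
  linarith

theorem erlangC_le_mul (hl : 1 ≤ l) (hρ0 : 0 ≤ ρ) (hρ1 : ρ < 1) : erlangC l ρ ≤ l * ρ := by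
  rcases le_or_gt 1 ((l : ℝ) * ρ) with hx | hx
  · exact (erlangC_le_one hρ0 hρ1).trans hx
  have hA := erlangTail_nonneg (l := l) hρ0 hρ1
  have hS := erlangHead_nonneg (l := l) hρ0
  have hkey := erlangTail_mul_one_sub_le hl hρ0 hρ1 hx
  have hx0 : 0 ≤ (l : ℝ) * ρ := by positivity
  rw [erlangC, mul_one_div, div_le_iff₀ (by linarith)]
  nlinarith [mul_nonneg hx0 hS]

end ErlangC

theorem mml_response_le_of_le {l lam mu p : ℝ} (hl : 0 < l) (hmu : 0 < mu) (h1 : lam < mu)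
    (hp : p ≤ l * (lam / mu)) :
    l / mu * (1 + p / (l * (1 - lam / mu))) ≤ l / (mu - lam) := by
  have hslack : 0 < 1 - lam / mu := by rw [sub_pos, div_lt_one hmu]; exact h1
  calc l / mu * (1 + p / (l * (1 - lam / mu)))
      ≤ l / mu * (1 + l * (lam / mu) / (l * (1 - lam / mu))) := by gcongr
    _ = l / (mu - lam) := by
        have : mu - lam ≠ 0 := by linarith
        field_simp
        ring

/-- For `0 < λ < μ` and `l ≥ 1`, the M/M/l expected response time
`(l/μ)(1 + ϱ_l/(l(1 - λ/μ)))`, with `ϱ_l` the Erlang-C probability for `l` servers,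
is at most the M/M/1-split response time `l/(μ - λ)`. -/
theorem mml_response_le_mm1_split (lam mu : ℝ) (h0 : 0 < lam) (h1 : lam < mu)
    (l : ℕ) (hl : 1 ≤ l) :
    ((l : ℝ) / mu) *
        (1 +
          (((l * (lam / mu)) ^ l / (l.factorial * (1 - lam / mu))) *
              (1 / (1 + (l * (lam / mu)) ^ l / (l.factorial * (1 - lam / mu)) +
                ∑ i ∈ Icc 1 (l - 1), (l * (lam / mu)) ^ i / i.factorial))) /
            (l * (1 - lam / mu)))
      ≤ l / (mu - lam) := by
  have hmu : 0 < mu := h0.trans h1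
  have hρ1 : lam / mu < 1 := (div_lt_one hmu).mpr h1
  exact mml_response_le_of_le (by exact_mod_cast hl) hmu h1
    (erlangC_le_mul hl (div_pos h0 hmu).le hρ1)
end

section
/- For p ∈ (0,1) and natural numbers n ≥ 1, l ≥ 1, the function l ↦ (1 − (1−p)^l)^n − (1 − (1−p^n)^l) is nonnegative, i.e., placing redundancy at the component level dominates placing redundancy at the chain level. -/
open Finset

/-- Factorization of a sum over function space of a product, i.e. independence. -/
lemma sum_fun_prod {α β : Type*} [Fintype α] [Fintype β] [DecidableEq α] (g : α → β → ℝ) :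
    ∑ F : α → β, ∏ a, g a (F a) = ∏ a, ∑ b, g a b :=
  (Fintype.prod_sum g).symm

/-- For `p ∈ (0,1)` and `n, l ≥ 1`, component-level redundancy dominates
chain-level redundancy: `(1 - (1-p)^l)^n - (1 - (1-p^n)^l) ≥ 0`. -/
theorem component_redundancy_dominates (p : ℝ) (hp : p ∈ Set.Ioo (0 : ℝ) 1)
    (n : ℕ) (hn : 1 ≤ n) :
    ∀ l : ℕ, 1 ≤ l → 0 ≤ (1 - (1 - p) ^ l) ^ n - (1 - (1 - p ^ n) ^ l) := by
  intro l _
  classical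
  set q := 1 - p with hq
  have hp0 : 0 ≤ p := le_of_lt hp.1
  have hq0 : 0 ≤ q := by rw [hq]; linarith [hp.2]
  set w : Bool → ℝ := fun b => if b then p else q with hw
  have hw0 : ∀ b, 0 ≤ w b := by intro b; cases b <;> simp [hw, hp0, hq0]
  have hsumw : ∑ b : Bool, w b = 1 := by simp [hw]; ring
  have hsumq : ∑ b : Bool, w b * (if b = false then (1:ℝ) else 0) = q := by simp [hw]
  have hsump : ∑ b : Bool, w b * (if b = true then (1:ℝ) else 0) = p := by simp [hw]
  set W : (Fin n → Fin l → Bool) → ℝ := fun F => ∏ i, ∏ j, w (F i j) with hW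
  have hW0 : ∀ F, 0 ≤ W F := fun F =>
    Finset.prod_nonneg fun i _ => Finset.prod_nonneg fun j _ => hw0 _
  have hone_l : ∑ r : Fin l → Bool, ∏ j, w (r j) = 1 := by
    rw [sum_fun_prod (fun (_ : Fin l) b => w b), hsumw]; simp
  have hone_n : ∑ c : Fin n → Bool, ∏ i, w (c i) = 1 := by
    rw [sum_fun_prod (fun (_ : Fin n) b => w b), hsumw]; simp
  -- total mass is 1
  have htot : ∑ F : Fin n → Fin l → Bool, W F = 1 := by
    rw [hW, sum_fun_prod (fun i (r : Fin l → Bool) => ∏ j, w (r j)), hone_l]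
    simp
  -- P2 : every row has a `true`
  have hP2 : ∑ F : Fin n → Fin l → Bool,
      W F * (if ∀ i, ∃ j, F i j then (1:ℝ) else 0) = (1 - q ^ l) ^ n := by
    have h1 : ∀ F : Fin n → Fin l → Bool,
        W F * (if ∀ i, ∃ j, F i j then (1:ℝ) else 0)
        = ∏ i, ((∏ j, w (F i j)) * (if ∃ j, F i j then (1:ℝ) else 0)) := by
      intro F
      rw [Finset.prod_mul_distrib, hW]
      congr 1
      rw [Finset.prod_boole]
      simp
    have hrow : (∑ r : Fin l → Bool,
        (∏ j, w (r j)) * (if ∃ j, r j then (1:ℝ) else 0)) = 1 - q ^ l := by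
      have hsplit : ∀ r : Fin l → Bool,
          (∏ j, w (r j)) * (if ∃ j, r j then (1:ℝ) else 0)
          = (∏ j, w (r j)) - ∏ j, (w (r j) * (if r j = false then (1:ℝ) else 0)) := by
        intro r
        rw [Finset.prod_mul_distrib, Finset.prod_boole]
        by_cases h : ∃ j, r j
        · have h' : ¬ ∀ j, r j = false := by
            obtain ⟨j, hj⟩ := h; intro hall; simp [hall j] at hj
          simp [h, h']
        · have h' : ∀ j, r j = false := by
            intro j; by_contra hc; exact h ⟨j, by simpa using hc⟩
          simp [h, h']
      simp_rw [hsplit]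
      rw [Finset.sum_sub_distrib, hone_l,
        sum_fun_prod (fun (_ : Fin l) b => w b * (if b = false then (1:ℝ) else 0)),
        hsumq]
      simp
    simp_rw [h1]
    rw [sum_fun_prod (fun i (r : Fin l → Bool) =>
      (∏ j, w (r j)) * (if ∃ j, r j then (1:ℝ) else 0)), hrow]
    simp
  -- P1 : some column is all `true`
  have hP1 : ∑ F : Fin n → Fin l → Bool,
      W F * (if ∃ j, ∀ i, F i j then (1:ℝ) else 0) = 1 - (1 - p ^ n) ^ l := by
    have h1 : ∀ F : Fin n → Fin l → Bool,
        W F * (if ∃ j, ∀ i, F i j then (1:ℝ) else 0)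
        = W F - W F * (if ∀ j, ∃ i, F i j = false then (1:ℝ) else 0) := by
      intro F
      by_cases h : ∃ j, ∀ i, F i j
      · have h' : ¬ ∀ j, ∃ i, F i j = false := by
          obtain ⟨j, hj⟩ := h
          intro hall
          obtain ⟨i, hi⟩ := hall j
          simp [hj i] at hi
        simp [h, h']
      · have h' : ∀ j, ∃ i, F i j = false := by
          intro j
          by_contra hc
          push_neg at hc
          exact h ⟨j, fun i => by simpa using hc i⟩
        simp [h, h']
    simp_rw [h1]
    rw [Finset.sum_sub_distrib, htot]
    -- compute the subtracted term by reindexing with transposition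
    have hswap : ∑ F : Fin n → Fin l → Bool,
        W F * (if ∀ j, ∃ i, F i j = false then (1:ℝ) else 0)
        = ∑ G : Fin l → Fin n → Bool,
          (∏ j, ∏ i, w (G j i)) * (if ∀ j, ∃ i, G j i = false then (1:ℝ) else 0) := by
      apply Fintype.sum_bijective (Function.swap)
        ⟨fun a b hab => funext fun i => funext fun j => congrFun (congrFun hab j) i,
          fun G => ⟨Function.swap G, rfl⟩⟩
      intro F
      rw [hW]
      congr 1
      exact Finset.prod_comm
    rw [hswap]
    have h2 : ∀ G : Fin l → Fin n → Bool,
        (∏ j, ∏ i, w (G j i)) * (if ∀ j, ∃ i, G j i = false then (1:ℝ) else 0)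
        = ∏ j, ((∏ i, w (G j i)) * (if ∃ i, G j i = false then (1:ℝ) else 0)) := by
      intro G
      rw [Finset.prod_mul_distrib]
      congr 1
      rw [Finset.prod_boole]
      simp
    have hcol : (∑ c : Fin n → Bool,
        (∏ i, w (c i)) * (if ∃ i, c i = false then (1:ℝ) else 0)) = 1 - p ^ n := by
      have hsplit : ∀ c : Fin n → Bool,
          (∏ i, w (c i)) * (if ∃ i, c i = false then (1:ℝ) else 0)
          = (∏ i, w (c i)) - ∏ i, (w (c i) * (if c i = true then (1:ℝ) else 0)) := by
        intro c
        rw [Finset.prod_mul_distrib, Finset.prod_boole]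
        by_cases h : ∃ i, c i = false
        · have h' : ¬ ∀ i, c i = true := by
            obtain ⟨i, hi⟩ := h; intro hall; simp [hall i] at hi
          simp [h, h']
        · have h' : ∀ i, c i = true := by
            intro i; by_contra hc; exact h ⟨i, by simpa using hc⟩
          simp [h, h']
      simp_rw [hsplit]
      rw [Finset.sum_sub_distrib, hone_n,
        sum_fun_prod (fun (_ : Fin n) b => w b * (if b = true then (1:ℝ) else 0)),
        hsump]
      simp
    simp_rw [h2]
    rw [sum_fun_prod (fun j (c : Fin n → Bool) =>
      (∏ i, w (c i)) * (if ∃ i, c i = false then (1:ℝ) else 0)), hcol]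
    simp
  -- conclude: pointwise the column event implies the row event
  have hmono : ∀ F : Fin n → Fin l → Bool,
      W F * (if ∃ j, ∀ i, F i j then (1:ℝ) else 0)
      ≤ W F * (if ∀ i, ∃ j, F i j then (1:ℝ) else 0) := by
    intro F
    apply mul_le_mul_of_nonneg_left _ (hW0 F)
    by_cases h : ∀ i, ∃ j, F i j
    · rw [if_pos h]
      split <;> norm_num
    · have hE1 : ¬ ∃ j, ∀ i, F i j := fun ⟨j, hj⟩ => h fun i => ⟨j, hj i⟩
      rw [if_neg h, if_neg hE1]
  have := Finset.sum_le_sum (fun F (_ : F ∈ Finset.univ) => hmono F)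
  rw [hP1, hP2] at this
  linarith
end
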